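/- Soundness of persistent-set exploration: let L be a finite acyclic deterministic LTS satisfying the independence axioms, with initial state s_I and transition relation Γ, and let Γ_r ⊆ Γ define a sub-LTS L_r. Suppose that for every state s reachable from s_I via Γ_r-transitions that is not final in L, the set T_s = { tid(a) : (s, a, s') ∈ Γ_r } is a nonempty persistent set for s in L. Then L_r is sound for L: for every full execution E of L there exists a full execution E' of L, all of whose transitions are in Γ_r, that is equivalent to E. -/

import Mathlib

/-- A labeled transition system over states `S`, actions `A`, and thread ids `T`. -/
structure LTS (S A T : Type) where
  tr : S → A → S → Prop
  tid : A → T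

namespace LTS

variable {S A T : Type}

/-- Determinism: for every state and thread there is at most one outgoing transition
labeled by an action of that thread. -/
def Deterministic (L : LTS S A T) : Prop :=
  ∀ ⦃s a a' s1 s2⦄, L.tr s a s1 → L.tr s a' s2 → L.tid a = L.tid a' → a = a' ∧ s1 = s2

/-- Thread `t` is enabled in state `s`. -/
def Enabled (L : LTS S A T) (s : S) (t : T) : Prop :=
  ∃ a s', L.tr s a s' ∧ L.tid a = t

/-- The set of threads enabled in `s`. -/
def enabledSet (L : LTS S A T) (s : S) : Set T := {t | L.Enabled s t}

/-- A state is final if no thread is enabled in it. -/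
def Final (L : LTS S A T) (s : S) : Prop := ∀ t, ¬ L.Enabled s t

end LTS

/-- Executions of a transition relation `R` from a state: a list of (action, next state)
pairs forming an alternating sequence of states and actions. -/
inductive ExecOf {S A : Type} (R : S → A → S → Prop) : S → List (A × S) → Prop
  | nil (s : S) : ExecOf R s []
  | cons {s : S} {a : A} {s' : S} {E : List (A × S)} :
      R s a s' → ExecOf R s' E → ExecOf R s ((a, s') :: E)

/-- Executions of the LTS `L` from a state. -/
def LTS.IsExec {S A T : Type} (L : LTS S A T) : S → List (A × S) → Prop := ExecOf L.tr

/-- The state in which an execution from `s` ends. -/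
def endState {S A : Type} (s : S) (E : List (A × S)) : S := (E.map Prod.snd).getLastD s

/-- `ind` is an independence relation for `L`: symmetric, and independent actions have
distinct thread ids. -/
def IndepRel {S A T : Type} (L : LTS S A T) (ind : A → A → Prop) : Prop :=
  (∀ a a', ind a a' → ind a' a) ∧ (∀ a a', ind a a' → L.tid a ≠ L.tid a')

/-- Commutation axiom: consecutive independent transitions can be swapped,
reaching the same state. -/
def Commutation {S A T : Type} (L : LTS S A T) (ind : A → A → Prop) : Prop :=
  ∀ a a' s s1 s2, ind a a' → L.tr s a s1 → L.tr s1 a' s2 →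
    ∃ s1', L.tr s a' s1' ∧ L.tr s1' a s2

/-- Enabledness preservation axiom: executing a transition independent of the transition
of another enabled thread keeps that thread enabled with the same action. -/
def EnabledPreserved {S A T : Type} (L : LTS S A T) (ind : A → A → Prop) : Prop :=
  ∀ s a s1 a' s1', L.tr s a s1 → L.tr s a' s1' → L.tid a ≠ L.tid a' → ind a a' →
    ∃ s2, L.tr s1 a' s2

/-- An action is invisible if it is independent of every action of every other thread. -/
def Invisible {S A T : Type} (L : LTS S A T) (ind : A → A → Prop) (a : A) : Prop :=
  ∀ a', L.tid a' ≠ L.tid a → ind a a'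

/-- A single swap of two consecutive transitions labeled by independent actions,
both sides being executions from `s`. -/
inductive SwapExec {S A T : Type} (L : LTS S A T) (ind : A → A → Prop) (s : S) :
    List (A × S) → List (A × S) → Prop
  | swap (u v : List (A × S)) (a a' : A) (x y x' : S) :
      ind a a' →
      L.IsExec s (u ++ (a, x) :: (a', y) :: v) →
      L.IsExec s (u ++ (a', x') :: (a, y) :: v) →
      SwapExec L ind s (u ++ (a, x) :: (a', y) :: v) (u ++ (a', x') :: (a, y) :: v)

/-- The smallest equivalence relation containing `r`. -/
inductive EqvClosure {α : Type} (r : α → α → Prop) : α → α → Prop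
  | rel {x y : α} : r x y → EqvClosure r x y
  | refl (x : α) : EqvClosure r x x
  | symm {x y : α} : EqvClosure r x y → EqvClosure r y x
  | trans {x y z : α} : EqvClosure r x y → EqvClosure r y z → EqvClosure r x z

/-- Two executions from `s` are equivalent if one is obtained from the other by a finite
sequence of swaps of consecutive independent transitions. -/
def ExecEquiv {S A T : Type} (L : LTS S A T) (ind : A → A → Prop) (s : S) :
    List (A × S) → List (A × S) → Prop :=
  EqvClosure (SwapExec L ind s)

/-- Thread `t` is a weak initial of execution `E` from `s`: some equivalent execution
starts with a transition of `t`. -/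
def WeakInitial {S A T : Type} (L : LTS S A T) (ind : A → A → Prop) (s : S)
    (E : List (A × S)) (t : T) : Prop :=
  ∃ E', L.IsExec s E' ∧ ExecEquiv L ind s E E' ∧
    ∃ p rest, E' = p :: rest ∧ L.tid p.1 = t

/-- `Q` is a source set for `s`: every nonempty execution from `s` ending in a final
state has a weak initial thread in `Q`. -/
def IsSourceSet {S A T : Type} (L : LTS S A T) (ind : A → A → Prop) (s : S)
    (Q : Set T) : Prop :=
  ∀ E, L.IsExec s E → E ≠ [] → L.Final (endState s E) →
    ∃ t ∈ Q, WeakInitial L ind s E t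

/-- `P ⊆ enabled(s)` is a persistent set for `s`: in every execution from `s` whose
actions all have thread ids outside `P`, every action is independent of the action of
`next(s, t)` for every `t ∈ P`. -/
def IsPersistentSet {S A T : Type} (L : LTS S A T) (ind : A → A → Prop) (s : S)
    (P : Set T) : Prop :=
  (∀ t ∈ P, L.Enabled s t) ∧
  ∀ E, L.IsExec s E → (∀ p ∈ E, L.tid p.1 ∉ P) →
    ∀ p ∈ E, ∀ t ∈ P, ∀ a s', L.tr s a s' → L.tid a = t → ind p.1 a

/-- Acyclicity: no execution visits the same state twice. -/
def Acyclic {S A T : Type} (L : LTS S A T) : Prop :=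
  ∀ s E, L.IsExec s E → (s :: E.map Prod.snd).Nodup

/-- `s'` is reachable from `s` via transitions of the relation `R`. -/
def ReachableVia {S A : Type} (R : S → A → S → Prop) (s s' : S) : Prop :=
  ∃ E, ExecOf R s E ∧ endState s E = s'

section PSoundAux

variable {S A T : Type}

lemma endState_cons' (s : S) (a : A) (x : S) (E : List (A × S)) :
    endState s ((a, x) :: E) = endState x E := by
  simp only [endState, List.map_cons, List.getLastD_cons]

lemma endState_append' (s : S) (u v : List (A × S)) :
    endState s (u ++ v) = endState (endState s u) v := by
  induction u generalizing s with
  | nil => rfl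
  | cons p u ih => obtain ⟨a, x⟩ := p; simp [endState_cons', ih]

lemma execOf_append_split {R : S → A → S → Prop} :
    ∀ {u : List (A × S)} {s v}, ExecOf R s (u ++ v) →
      ExecOf R s u ∧ ExecOf R (endState s u) v := by
  intro u
  induction u with
  | nil => intro s v h; exact ⟨ExecOf.nil s, h⟩
  | cons p u ih =>
    intro s v h
    obtain ⟨a, x⟩ := p
    cases h with
    | cons htr htail =>
      obtain ⟨h1, h2⟩ := ih htail
      exact ⟨ExecOf.cons htr h1, by rwa [endState_cons']⟩

lemma execOf_append_mk {R : S → A → S → Prop} :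
    ∀ {u : List (A × S)} {s v}, ExecOf R s u → ExecOf R (endState s u) v →
      ExecOf R s (u ++ v) := by
  intro u
  induction u with
  | nil => intro s v _ h2; exact h2
  | cons p u ih =>
    intro s v h1 h2
    obtain ⟨a, x⟩ := p
    cases h1 with
    | cons htr htail =>
      rw [endState_cons'] at h2
      exact ExecOf.cons htr (ih htail h2)

lemma swapExec_endState {L : LTS S A T} {ind : A → A → Prop} {s : S}
    {E F : List (A × S)} (h : SwapExec L ind s E F) : endState s E = endState s F := by
  cases h with
  | swap u v a a' x y x' hind h1 h2 =>
    simp [endState_append', endState_cons']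

lemma execEquiv_endState {L : LTS S A T} {ind : A → A → Prop} {s : S}
    {E F : List (A × S)} (h : ExecEquiv L ind s E F) : endState s E = endState s F := by
  induction h with
  | rel h => exact swapExec_endState h
  | refl => rfl
  | symm _ ih => exact ih.symm
  | trans _ _ ih1 ih2 => exact ih1.trans ih2

lemma execEquiv_cons {L : LTS S A T} {ind : A → A → Prop} {s : S} {a : A} {s1 : S}
    {E F : List (A × S)} (htr : L.tr s a s1) (h : ExecEquiv L ind s1 E F) :
    ExecEquiv L ind s ((a, s1) :: E) ((a, s1) :: F) := by
  induction h with
  | rel h =>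
    cases h with
    | swap u v b b' x y x' hbb h1 h2 =>
      exact EqvClosure.rel (SwapExec.swap ((a, s1) :: u) v b b' x y x' hbb
        (ExecOf.cons htr h1) (ExecOf.cons htr h2))
  | refl => exact EqvClosure.refl _
  | symm _ ih => exact EqvClosure.symm ih
  | trans _ _ ih1 ih2 => exact EqvClosure.trans ih1 ih2

lemma enabled_along {L : LTS S A T} {ind : A → A → Prop} (hind : IndepRel L ind)
    (hen : EnabledPreserved L ind) :
    ∀ {u : List (A × S)} {s a sa}, ExecOf L.tr s u → L.tr s a sa →
      (∀ p ∈ u, ind p.1 a) → ∃ z, L.tr (endState s u) a z := by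
  intro u
  induction u with
  | nil => intro s a sa _ h2 _; exact ⟨sa, h2⟩
  | cons p u ih =>
    intro s a sa h1 h2 h3
    obtain ⟨b, y⟩ := p
    cases h1 with
    | cons htr htail =>
      have hindba : ind b a := h3 (b, y) List.mem_cons_self
      have hne : L.tid b ≠ L.tid a := hind.2 _ _ hindba
      obtain ⟨z, hz⟩ := hen s b y a sa htr h2 hne hindba
      rw [endState_cons']
      exact ih htail hz (fun q hq => h3 q (List.mem_cons_of_mem _ hq))

lemma bubble_front {L : LTS S A T} {ind : A → A → Prop}
    (hcomm : Commutation L ind) (hind : IndepRel L ind) :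
    ∀ (u : List (A × S)) {s : S} {a : A} {x : S} {v : List (A × S)},
      L.IsExec s (u ++ (a, x) :: v) → (∀ p ∈ u, ind p.1 a) →
      ∃ x' w, L.tr s a x' ∧ w.length = u.length ∧
        L.IsExec s ((a, x') :: (w ++ v)) ∧
        ExecEquiv L ind s (u ++ (a, x) :: v) ((a, x') :: (w ++ v)) := by
  intro u
  induction u with
  | nil =>
    intro s a x v h _
    cases h with
    | cons htr htail =>
      exact ⟨x, [], htr, rfl, ExecOf.cons htr htail, EqvClosure.refl _⟩
  | cons p u ih =>
    intro s a x v h hall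
    obtain ⟨b, y⟩ := p
    cases h with
    | cons htr htail =>
      obtain ⟨x1, w1, htra, hlen, hexec1, hequiv1⟩ :=
        ih htail (fun q hq => hall q (List.mem_cons_of_mem _ hq))
      have hindba : ind b a := hall (b, y) List.mem_cons_self
      obtain ⟨x', hx'1, hx'2⟩ := hcomm b a s y x1 hindba htr htra
      have htail1 : L.IsExec x1 (w1 ++ v) := by
        cases hexec1 with | cons _ t => exact t
      have hswap : SwapExec L ind s ((b, y) :: (a, x1) :: (w1 ++ v))
          ((a, x') :: (b, x1) :: (w1 ++ v)) :=
        SwapExec.swap [] (w1 ++ v) b a y x1 x' hindba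
          (ExecOf.cons htr hexec1)
          (ExecOf.cons hx'1 (ExecOf.cons hx'2 htail1))
      refine ⟨x', (b, x1) :: w1, hx'1, by simp [hlen],
        ExecOf.cons hx'1 (ExecOf.cons hx'2 htail1), ?_⟩
      exact EqvClosure.trans (execEquiv_cons htr hequiv1) (EqvClosure.rel hswap)

lemma first_split {P : T → Prop} (tid : A → T) :
    ∀ (E : List (A × S)), (¬ ∀ p ∈ E, ¬ P (tid p.1)) →
      ∃ u p v, E = u ++ p :: v ∧ P (tid p.1) ∧ ∀ q ∈ u, ¬ P (tid q.1) := by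
  intro E
  induction E with
  | nil => intro h; exact absurd (by simp) h
  | cons p E ih =>
    intro h
    by_cases hp : P (tid p.1)
    · exact ⟨[], p, E, rfl, hp, by simp⟩
    · have h2 : ¬ ∀ q ∈ E, ¬ P (tid q.1) := by
        intro hq
        apply h
        intro q hq'
        rcases List.mem_cons.mp hq' with h1 | h1
        · subst h1; exact hp
        · exact hq q h1
      obtain ⟨u, q, v, hEq, hq, hu⟩ := ih h2
      refine ⟨p :: u, q, v, by rw [hEq]; rfl, hq, ?_⟩
      intro r hr
      rcases List.mem_cons.mp hr with h1 | h1
      · subst h1; exact hp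
      · exact hu r h1

lemma psound_main_aux (L : LTS S A T) (ind : A → A → Prop)
    (hdet : L.Deterministic) (hind : IndepRel L ind)
    (hcomm : Commutation L ind) (hen : EnabledPreserved L ind)
    (sI : S) (Γr : S → A → S → Prop)
    (hsub : ∀ s a s', Γr s a s' → L.tr s a s')
    (hper : ∀ s, ReachableVia Γr sI s → ¬ L.Final s →
      {t | ∃ a s', Γr s a s' ∧ L.tid a = t}.Nonempty ∧
      IsPersistentSet L ind s {t | ∃ a s', Γr s a s' ∧ L.tid a = t}) :
    ∀ (n : ℕ) (s : S) (E : List (A × S)), E.length ≤ n → ReachableVia Γr sI s →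
      L.IsExec s E → L.Final (endState s E) →
      ∃ E', ExecOf Γr s E' ∧ L.IsExec s E' ∧ L.Final (endState s E') ∧
        ExecEquiv L ind s E E' := by
  intro n
  induction n with
  | zero =>
    intro s E hlen _ hE hfin
    have hE0 : E = [] := List.length_eq_zero_iff.mp (Nat.le_zero.mp hlen)
    subst hE0
    exact ⟨[], ExecOf.nil s, ExecOf.nil s, hfin, EqvClosure.refl _⟩
  | succ n ih =>
    intro s E hlen hreach hE hfin
    cases E with
    | nil => exact ⟨[], ExecOf.nil s, ExecOf.nil s, hfin, EqvClosure.refl _⟩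
    | cons p0 E0 =>
      have hnotfin : ¬ L.Final s := by
        cases hE with
        | cons htr _ => exact fun h => h _ ⟨_, _, htr, rfl⟩
      obtain ⟨hne, hpers⟩ := hper s hreach hnotfin
      by_cases hall : ∀ p ∈ (p0 :: E0), L.tid p.1 ∉ {t | ∃ a s', Γr s a s' ∧ L.tid a = t}
      · obtain ⟨t, a, s', hΓ, hta⟩ := hne
        have htr : L.tr s a s' := hsub _ _ _ hΓ
        have hindall : ∀ p ∈ (p0 :: E0), ind p.1 a := fun p hp =>
          hpers.2 _ hE hall p hp t ⟨a, s', hΓ, hta⟩ a s' htr hta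
        obtain ⟨z, hz⟩ := enabled_along hind hen hE htr hindall
        exact (hfin (L.tid a) ⟨a, z, hz, rfl⟩).elim
      · obtain ⟨u, pk, v, hEq, hpk, hu⟩ :=
          first_split (P := fun t => t ∈ {t | ∃ a s', Γr s a s' ∧ L.tid a = t})
            L.tid (p0 :: E0) hall
        obtain ⟨ak, sk⟩ := pk
        obtain ⟨astar, sstar, hΓstar, htastar⟩ := hpk
        have htrstar : L.tr s astar sstar := hsub _ _ _ hΓstar
        rw [hEq] at hE hlen hfin ⊢
        obtain ⟨hEu, hEtail⟩ := execOf_append_split hE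
        have htrk : L.tr (endState s u) ak sk := by
          cases hEtail with | cons h _ => exact h
        have hindu : ∀ q ∈ u, ind q.1 astar := fun q hq =>
          hpers.2 u hEu hu q hq (L.tid ak) ⟨astar, sstar, hΓstar, htastar⟩
            astar sstar htrstar htastar
        obtain ⟨z, hz⟩ := enabled_along hind hen hEu htrstar hindu
        have hak : ak = astar ∧ sk = z := hdet htrk hz htastar.symm
        have hindu' : ∀ q ∈ u, ind q.1 ak := by rw [hak.1]; exact hindu
        obtain ⟨x', w, htr', hwlen, hexec', hequiv'⟩ :=
          bubble_front hcomm hind u hE hindu'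
        have hx' : x' = sstar :=
          (hdet htr' htrstar (by rw [hak.1])).2
        have hΓ' : Γr s ak x' := by rw [hak.1, hx']; exact hΓstar
        have hreach' : ReachableVia Γr sI x' := by
          obtain ⟨E1, hE1, hend1⟩ := hreach
          refine ⟨E1 ++ [(ak, x')], execOf_append_mk hE1 ?_, ?_⟩
          · rw [hend1]; exact ExecOf.cons hΓ' (ExecOf.nil _)
          · rw [endState_append', hend1, endState_cons']; rfl
        have htail' : L.IsExec x' (w ++ v) := by
          cases hexec' with | cons _ t => exact t
        have hlen' : (w ++ v).length ≤ n := by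
          simp only [List.length_append, List.length_cons] at hlen ⊢
          omega
        have hfin' : L.Final (endState x' (w ++ v)) := by
          rw [execEquiv_endState hequiv', endState_cons'] at hfin
          exact hfin
        obtain ⟨R', hR1, hR2, hR3, hR4⟩ := ih x' (w ++ v) hlen' hreach' htail' hfin'
        refine ⟨(ak, x') :: R', ExecOf.cons hΓ' hR1, ExecOf.cons htr' hR2,
          by rw [endState_cons']; exact hR3, ?_⟩
        exact EqvClosure.trans hequiv' (execEquiv_cons htr' hR4)

end PSoundAux

/-- Soundness of persistent-set exploration: if every non-final state
reachable via the sub-relation `Γr ⊆ Γ` is expanded (in `Γr`) according to a nonempty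
persistent set, then every full execution of `L` is equivalent to a full execution of
`L` all of whose transitions are in `Γr`. -/
theorem persistentSet_exploration_sound {S A T : Type} [Finite S]
    (L : LTS S A T) (ind : A → A → Prop)
    (hdet : L.Deterministic) (hind : IndepRel L ind)
    (hcomm : Commutation L ind) (hen : EnabledPreserved L ind)
    (hacyc : Acyclic L)
    (sI : S) (Γr : S → A → S → Prop)
    (hsub : ∀ s a s', Γr s a s' → L.tr s a s')
    (hper : ∀ s, ReachableVia Γr sI s → ¬ L.Final s →
      {t | ∃ a s', Γr s a s' ∧ L.tid a = t}.Nonempty ∧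
      IsPersistentSet L ind s {t | ∃ a s', Γr s a s' ∧ L.tid a = t})
    (E : List (A × S)) (hE : L.IsExec sI E) (hfin : L.Final (endState sI E)) :
    ∃ E', ExecOf Γr sI E' ∧ L.IsExec sI E' ∧ L.Final (endState sI E') ∧
      ExecEquiv L ind sI E E' := by
  exact psound_main_aux L ind hdet hind hcomm hen sI Γr hsub hper E.length sI E
    le_rfl ⟨[], ExecOf.nil sI, rfl⟩ hE hfin
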